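/- For every integer n ≥ 1 and every real number x ≥ 1, the derivative of Δₙ(x) := Pₙ(x) − P_{n−1}(x) is strictly positive: Δₙ′(x) > 0. -/
import Mathlib


/-- `σ₂(n) = ∑_{d ∣ n} d²`, the sum of the squares of the divisors of `n`. -/
def sigma2 (n : ℕ) : ℕ := ∑ d ∈ n.divisors, d ^ 2

/-- The polynomials `Pₙ`, defined by `P 0 = 1` and
`Pₙ(x) = (x/n) ∑_{k=1}^{n} σ₂(k) · P_{n−k}(x)` for `n ≥ 1`.
They satisfy `Pₙ(1) = pp(n)`, the number of plane partitions of `n`. -/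
noncomputable def P : ℕ → Polynomial ℝ
  | 0 => 1
  | n + 1 => Polynomial.C (((n : ℝ) + 1)⁻¹) * Polynomial.X *
      ∑ k ∈ Finset.range (n + 1), Polynomial.C ((sigma2 (k + 1) : ℝ)) * P (n - k)

open Polynomial Finset

lemma one_le_sigma2 (k : ℕ) : 1 ≤ sigma2 (k + 1) := by
  have h1 : (1:ℕ) ∈ (k+1).divisors := Nat.one_mem_divisors.mpr (Nat.succ_ne_zero k)
  calc (1:ℕ) = 1^2 := by norm_num
  _ ≤ ∑ d ∈ (k+1).divisors, d^2 := Finset.single_le_sum (f := fun d => d^2) (fun i _ => Nat.zero_le _) h1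

noncomputable def aa (x : ℝ) (n : ℕ) : ℝ := (P n).eval x
noncomputable def bb (x : ℝ) (n : ℕ) : ℝ := ((P n).derivative).eval x

lemma aa_zero (x : ℝ) : aa x 0 = 1 := by simp [aa, P]
lemma bb_zero (x : ℝ) : bb x 0 = 0 := by simp [bb, P]

lemma aa_rec (x : ℝ) (n : ℕ) :
    ((n:ℝ)+1) * aa x (n+1) =
      x * ∑ k ∈ Finset.range (n+1), (sigma2 (k+1):ℝ) * aa x (n-k) := by
  have hpos : ((n:ℝ)+1) ≠ 0 := by positivity
  simp only [aa, P, eval_mul, eval_C, eval_X, eval_finset_sum]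
  field_simp

lemma bb_rec (x : ℝ) (n : ℕ) :
    ((n:ℝ)+1) * bb x (n+1) =
      (∑ k ∈ Finset.range (n+1), (sigma2 (k+1):ℝ) * aa x (n-k))
      + x * ∑ k ∈ Finset.range (n+1), (sigma2 (k+1):ℝ) * bb x (n-k) := by
  have hpos : ((n:ℝ)+1) ≠ 0 := by positivity
  simp only [aa, bb, P]
  rw [derivative_mul, derivative_mul, derivative_C, derivative_X]
  rw [map_sum derivative]
  simp only [derivative_C_mul]
  simp only [eval_add, eval_mul, eval_C, eval_X, eval_finset_sum, zero_mul, zero_add, mul_one]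
  field_simp

lemma telescope (m : ℕ) (g : ℕ → ℝ) :
    ∑ k ∈ Finset.range (m+1), (g (m+1-k) - g (m-k)) = g (m+1) - g 0 := by
  have h : ∑ k ∈ Finset.range (m+1), (g (m+1-k) - g (m-k))
      = ∑ k ∈ Finset.range (m+1), (g (k+1) - g k) := by
    rw [← Finset.sum_range_reflect (fun j => g (j+1) - g j) (m+1)]
    apply Finset.sum_congr rfl
    intro k hk
    have hk' := Finset.mem_range.mp hk
    rw [show m+1-k = (m-k)+1 by omega]
    rw [show m+1-1-k = m-k by omega]
  rw [h, Finset.sum_range_sub]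

lemma core (x : ℝ) (hx : 1 ≤ x) (m : ℕ) (g : ℕ → ℝ)
    (hg : ∀ k, k ≤ m → g k ≤ g (k+1)) :
    x * (∑ k ∈ Finset.range (m+1), (sigma2 (k+1):ℝ) * g (m-k)) + (g (m+1) - g 0)
      ≤ x * ∑ k ∈ Finset.range (m+1), (sigma2 (k+1):ℝ) * g (m+1-k) := by
  have hx0 : (0:ℝ) < x := lt_of_lt_of_le one_pos hx
  have hkey : ∀ k ∈ Finset.range (m+1),
      x * ((sigma2 (k+1):ℝ) * g (m-k)) + (g (m+1-k) - g (m-k))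
        ≤ x * ((sigma2 (k+1):ℝ) * g (m+1-k)) := by
    intro k hk
    have hk' := Finset.mem_range.mp hk
    have hd : 0 ≤ g (m+1-k) - g (m-k) := by
      have := hg (m-k) (by omega)
      rw [show m+1-k = (m-k)+1 by omega]
      linarith
    have hσ : (1:ℝ) ≤ (sigma2 (k+1):ℝ) := by
      exact_mod_cast one_le_sigma2 k
    have hxσ : (1:ℝ) ≤ x * (sigma2 (k+1):ℝ) := by nlinarith
    nlinarith [mul_nonneg (sub_nonneg.mpr hxσ) hd]
  have hsum := Finset.sum_le_sum hkey
  rw [Finset.sum_add_distrib, telescope m g] at hsum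
  rw [Finset.mul_sum, Finset.mul_sum]
  exact hsum

lemma sigma2_one : sigma2 1 = 1 := by decide

lemma main_ind (x : ℝ) (hx : 1 ≤ x) :
    ∀ n : ℕ, aa x n ≤ aa x (n+1) ∧ bb x n < bb x (n+1) := by
  have hx0 : (0:ℝ) < x := lt_of_lt_of_le one_pos hx
  intro n
  induction n using Nat.strong_induction_on with
  | _ n IH =>
    match n with
    | 0 =>
      have ha1 : aa x 1 = x := by
        have := aa_rec x 0
        simp [aa_zero, sigma2_one] at this
        linarith
      have hb1 : bb x 1 = 1 := by
        have := bb_rec x 0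
        simp [aa_zero, bb_zero, sigma2_one] at this
        linarith
      constructor
      · rw [aa_zero, ha1]; exact hx
      · rw [bb_zero, hb1]; exact one_pos
    | m + 1 =>
      have hAd : ∀ k, k ≤ m → aa x k ≤ aa x (k+1) := fun k hk =>
        (IH k (by omega)).1
      have hBd : ∀ k, k ≤ m → bb x k ≤ bb x (k+1) := fun k hk =>
        le_of_lt (IH k (by omega)).2
      have hσ : (1:ℝ) ≤ (sigma2 (m+2):ℝ) := by exact_mod_cast one_le_sigma2 (m+1)
      have hxσ2 : (1:ℝ) ≤ x * (sigma2 (m+2):ℝ) := by nlinarith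
      have split : ∀ f : ℕ → ℝ,
          ∑ k ∈ Finset.range (m+1+1), (sigma2 (k+1):ℝ) * f (m+1-k)
            = (∑ k ∈ Finset.range (m+1), (sigma2 (k+1):ℝ) * f (m+1-k))
              + (sigma2 (m+2):ℝ) * f 0 := by
        intro f
        rw [Finset.sum_range_succ]
        norm_num
      -- recursions
      have h2 := aa_rec x (m+1)
      have h1 := aa_rec x m
      rw [split (aa x), aa_zero, mul_one, mul_add] at h2
      push_cast at h2 h1
      have hcoreA := core x hx m (aa x) hAd
      rw [aa_zero] at hcoreA
      -- A step
      have hApos : ((m:ℝ)+1+1) * aa x (m+1) ≤ ((m:ℝ)+1+1) * aa x (m+2) := by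
        have hexp : ((m:ℝ)+1+1) * aa x (m+1) = ((m:ℝ)+1) * aa x (m+1) + aa x (m+1) := by ring
        have h2' : ((m:ℝ)+1+1) * aa x (m+2)
            = x * (∑ k ∈ Finset.range (m+1), (sigma2 (k+1):ℝ) * aa x (m+1-k))
              + x * (sigma2 (m+2):ℝ) := by
          convert h2 using 2 <;> push_cast <;> ring
        linarith
      have hA : aa x (m+1) ≤ aa x (m+2) :=
        le_of_mul_le_mul_left hApos (by positivity)
      refine ⟨hA, ?_⟩
      -- B step
      have g2 := bb_rec x (m+1)
      have g1 := bb_rec x m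
      rw [split (aa x), split (bb x), aa_zero, bb_zero, mul_one, mul_zero, add_zero] at g2
      push_cast at g2 g1
      have hcoreB := core x hx m (bb x) hBd
      rw [bb_zero, sub_zero] at hcoreB
      have haamono : (∑ k ∈ Finset.range (m+1), (sigma2 (k+1):ℝ) * aa x (m-k))
          ≤ ∑ k ∈ Finset.range (m+1), (sigma2 (k+1):ℝ) * aa x (m+1-k) := by
        apply Finset.sum_le_sum
        intro k hk
        have hk' := Finset.mem_range.mp hk
        have hd : aa x (m-k) ≤ aa x (m+1-k) := by
          have := hAd (m-k) (by omega)
          rwa [show m+1-k = (m-k)+1 by omega]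
        have hσk : (0:ℝ) ≤ (sigma2 (k+1):ℝ) := by positivity
        exact mul_le_mul_of_nonneg_left hd hσk
      have g2' : ((m:ℝ)+1+1) * bb x (m+2)
          = ((∑ k ∈ Finset.range (m+1), (sigma2 (k+1):ℝ) * aa x (m+1-k))
              + (sigma2 (m+2):ℝ))
            + x * (∑ k ∈ Finset.range (m+1), (sigma2 (k+1):ℝ) * bb x (m+1-k)) := by
        convert g2 using 2 <;> push_cast <;> ring
      have hBpos : ((m:ℝ)+1+1) * bb x (m+1) + 1 ≤ ((m:ℝ)+1+1) * bb x (m+2) := by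
        have hexp : ((m:ℝ)+1+1) * bb x (m+1) = ((m:ℝ)+1) * bb x (m+1) + bb x (m+1) := by ring
        linarith
      have hBpos' : ((m:ℝ)+1+1) * bb x (m+1) < ((m:ℝ)+1+1) * bb x (m+2) := by linarith
      exact lt_of_mul_lt_mul_left hBpos' (by positivity)

/-- For every `n ≥ 1` and real `x ≥ 1`, the derivative of `Δₙ := P n - P (n-1)`
is strictly positive at `x`. -/
theorem Delta_derivative_pos (n : ℕ) (hn : 1 ≤ n) (x : ℝ) (hx : 1 ≤ x) :
    (Polynomial.derivative (P n - P (n - 1))).eval x > 0 := by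
  obtain ⟨m, rfl⟩ : ∃ m, n = m + 1 := ⟨n - 1, by omega⟩
  have h := (main_ind x hx m).2
  simp only [Nat.add_sub_cancel]
  rw [derivative_sub, eval_sub]
  have h' : bb x m < bb x (m+1) := h
  simp only [bb] at h'
  linarith
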